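/- arXiv:2112.03865 — 4 statements merged into one kernel-verified Lean document; each statement's English description precedes it below -/
import Mathlib

section
/- Let A, B, C be real random variables and Y a real random variable such that A, B, C are pairwise uncorrelated conditionally (specifically E[AB] = E[AY]E[BY]/E[Y²], E[AC] = E[AY]E[CY]/E[Y²], E[BC] = E[BY]E[CY]/E[Y²]), with E[AB], E[AC], E[BC], E[Y²] all nonzero. Then |E[AY]| = sqrt(|E[AB]|·|E[AC]|·E[Y²]/|E[BC]|). -/
open MeasureTheory

/-- Continuous triplets identity: the accuracy `E[AY]` is recovered up to sign from the
observable pairwise moments. -/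
theorem stmt_2 {Ω : Type*} [MeasurableSpace Ω] (μ : Measure Ω) [IsProbabilityMeasure μ]
    (A B C Y : Ω → ℝ)
    (eAB eAC eBC eAY eBY eCY eY2 : ℝ)
    (hAB : eAB = ∫ ω, A ω * B ω ∂μ) (hAC : eAC = ∫ ω, A ω * C ω ∂μ)
    (hBC : eBC = ∫ ω, B ω * C ω ∂μ)
    (hAY : eAY = ∫ ω, A ω * Y ω ∂μ) (hBY : eBY = ∫ ω, B ω * Y ω ∂μ)
    (hCY : eCY = ∫ ω, C ω * Y ω ∂μ) (hY2 : eY2 = ∫ ω, (Y ω) ^ 2 ∂μ)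
    (hfAB : eAB = eAY * eBY / eY2)
    (hfAC : eAC = eAY * eCY / eY2)
    (hfBC : eBC = eBY * eCY / eY2)
    (hAB0 : eAB ≠ 0) (hAC0 : eAC ≠ 0) (hBC0 : eBC ≠ 0) (hY20 : eY2 ≠ 0) :
    |eAY| = Real.sqrt (|eAB| * |eAC| * eY2 / |eBC|) := by
  have h0 : (0:ℝ) ≤ eY2 := by
    rw [hY2]; exact integral_nonneg fun ω => sq_nonneg _
  have hY2pos : 0 < eY2 := h0.lt_of_ne (Ne.symm hY20)
  have hBY0 : eBY ≠ 0 := fun h => hAB0 (by simp [hfAB, h])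
  have hCY0 : eCY ≠ 0 := fun h => hAC0 (by simp [hfAC, h])
  have key : |eAB| * |eAC| * eY2 / |eBC| = eAY ^ 2 := by
    rw [hfAB, hfAC, hfBC, abs_div, abs_div, abs_div, abs_mul, abs_mul, abs_mul,
      abs_of_pos hY2pos]
    field_simp
    ring_nf
    rw [sq_abs]
  rw [key, Real.sqrt_sq_eq_abs]
end

section
/- Let λᵃ, λᵇ, λᶜ and y be random vectors in ℝᵈ such that λᵃ − y, λᵇ − y, λᶜ − y are pairwise independent with mean zero. Then E‖λᵃ − y‖² = (E‖λᵃ − λᵇ‖² + E‖λᵃ − λᶜ‖² − E‖λᵇ − λᶜ‖²)/2. -/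
/-!
Write `a = λᵃ - y`, `b = λᵇ - y`, `c = λᶜ - y`, so that `λᵃ - λᵇ = a - b` and so on.
Independence and mean zero kill the cross term: `E⟪a, b⟫ = ⟪E a, E b⟫ = 0`, hence
`E‖a - b‖² = E‖a‖² + E‖b‖²`, and similarly for the other two pairs. Solving the resulting
linear system for `E‖a‖²` gives the identity.
-/

open MeasureTheory ProbabilityTheory
open scoped InnerProductSpace

namespace ProbabilityTheory

variable {Ω E : Type*} [MeasurableSpace Ω] {μ : Measure Ω}
  [NormedAddCommGroup E] [InnerProductSpace ℝ E] [CompleteSpace E]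
  [MeasurableSpace E] [BorelSpace E] {X Y : Ω → E}

theorem IndepFun.integral_inner_eq_zero (hXY : IndepFun X Y μ) (hX : Integrable X μ)
    (hY : Integrable Y μ) (hX₀ : ∫ ω, X ω ∂μ = 0) :
    ∫ ω, ⟪X ω, Y ω⟫_ℝ ∂μ = 0 :=
  (hXY.integral_bilin hX hY (innerSL ℝ)).trans (by simp [hX₀])

theorem IndepFun.integral_norm_sub_sq [IsFiniteMeasure μ] (hXY : IndepFun X Y μ)
    (hX : MemLp X 2 μ) (hY : MemLp Y 2 μ) (hX₀ : ∫ ω, X ω ∂μ = 0) :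
    ∫ ω, ‖X ω - Y ω‖ ^ 2 ∂μ = (∫ ω, ‖X ω‖ ^ 2 ∂μ) + ∫ ω, ‖Y ω‖ ^ 2 ∂μ := by
  have hX₁ := hX.integrable one_le_two
  have hY₁ := hY.integrable one_le_two
  have h_inner : Integrable (fun ω => 2 * ⟪X ω, Y ω⟫_ℝ) μ :=
    (hXY.integrable_bilin hX₁ hY₁ (innerSL ℝ)).const_mul 2
  have h_diff : Integrable (fun ω => ‖X ω‖ ^ 2 - 2 * ⟪X ω, Y ω⟫_ℝ) μ :=
    hX.norm.integrable_sq.sub h_inner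
  simp_rw [norm_sub_sq_real]
  rw [integral_add h_diff hY.norm.integrable_sq,
    integral_sub hX.norm.integrable_sq h_inner, integral_const_mul,
    hXY.integral_inner_eq_zero hX₁ hY₁ hX₀]
  ring

end ProbabilityTheory

theorem stmt_3_general {Ω : Type*} [MeasurableSpace Ω] (μ : Measure Ω) [IsProbabilityMeasure μ]
    (d : ℕ) (la lb lc y : Ω → EuclideanSpace ℝ (Fin d))
    (hab : IndepFun (fun ω => la ω - y ω) (fun ω => lb ω - y ω) μ)
    (hac : IndepFun (fun ω => la ω - y ω) (fun ω => lc ω - y ω) μ)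
    (hbc : IndepFun (fun ω => lb ω - y ω) (fun ω => lc ω - y ω) μ)
    (ha2 : MemLp (fun ω => la ω - y ω) 2 μ)
    (hb2 : MemLp (fun ω => lb ω - y ω) 2 μ)
    (hc2 : MemLp (fun ω => lc ω - y ω) 2 μ)
    (hza : ∫ ω, (la ω - y ω) ∂μ = 0)
    (hzb : ∫ ω, (lb ω - y ω) ∂μ = 0) :
    ∫ ω, ‖la ω - y ω‖ ^ 2 ∂μ =
      ((∫ ω, ‖la ω - lb ω‖ ^ 2 ∂μ) + (∫ ω, ‖la ω - lc ω‖ ^ 2 ∂μ)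
        - ∫ ω, ‖lb ω - lc ω‖ ^ 2 ∂μ) / 2 := by
  have h_errors (u v : Ω → EuclideanSpace ℝ (Fin d)) :
      ∫ ω, ‖u ω - v ω‖ ^ 2 ∂μ = ∫ ω, ‖(u ω - y ω) - (v ω - y ω)‖ ^ 2 ∂μ := by
    simp_rw [sub_sub_sub_cancel_right]
  rw [h_errors la lb, h_errors la lc, h_errors lb lc, hab.integral_norm_sub_sq ha2 hb2 hza,
    hac.integral_norm_sub_sq ha2 hc2 hza, hbc.integral_norm_sub_sq hb2 hc2 hzb]
  ring

/-- Triplet identity for vector-valued labeling functions with pairwise independent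
mean-zero errors. -/
theorem stmt_3 {Ω : Type*} [MeasurableSpace Ω] (μ : Measure Ω) [IsProbabilityMeasure μ]
    (d : ℕ) (la lb lc y : Ω → EuclideanSpace ℝ (Fin d))
    (hma : Measurable (fun ω => la ω - y ω))
    (hmb : Measurable (fun ω => lb ω - y ω))
    (hmc : Measurable (fun ω => lc ω - y ω))
    (hab : IndepFun (fun ω => la ω - y ω) (fun ω => lb ω - y ω) μ)
    (hac : IndepFun (fun ω => la ω - y ω) (fun ω => lc ω - y ω) μ)
    (hbc : IndepFun (fun ω => lb ω - y ω) (fun ω => lc ω - y ω) μ)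
    (ha2 : MemLp (fun ω => la ω - y ω) 2 μ)
    (hb2 : MemLp (fun ω => lb ω - y ω) 2 μ)
    (hc2 : MemLp (fun ω => lc ω - y ω) 2 μ)
    (hza : ∫ ω, (la ω - y ω) ∂μ = 0)
    (hzb : ∫ ω, (lb ω - y ω) ∂μ = 0)
    (hzc : ∫ ω, (lc ω - y ω) ∂μ = 0) :
    ∫ ω, ‖la ω - y ω‖ ^ 2 ∂μ =
      ((∫ ω, ‖la ω - lb ω‖ ^ 2 ∂μ) + (∫ ω, ‖la ω - lc ω‖ ^ 2 ∂μ)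
        - ∫ ω, ‖lb ω - lc ω‖ ^ 2 ∂μ) / 2 :=
  stmt_3_general μ d la lb lc y hab hac hbc ha2 hb2 hc2 hza hzb
end

section
/- For ρ ≥ 1 and k = ρ, define g_k(θ) = −k·e^{−θ}/(1−e^{−θ})² + Σ_{j=1}^{k} j²·e^{−θj}/(1−e^{−θj})². Then for all θ > 4·ln 2, g_k(θ) ≤ 0. -/
open Real Finset

lemma aux16 : ∀ n : ℕ, ((n : ℝ) + 1) ^ 2 ≤ 16 ^ n := by
  intro n
  induction n with
  | zero => norm_num
  | succ n ih =>
    push_cast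
    have h16 : (16:ℝ) ^ (n+1) = 16 * 16 ^ n := by ring
    rw [h16]
    nlinarith [Nat.cast_nonneg (α := ℝ) n]

/-- Non-positivity of `g_k`, the derivative of the expected Kendall tau distance under
the Mallows model, for `θ > 4 ln 2`. -/
theorem stmt_5 (ρ : ℕ) (hρ : 1 ≤ ρ) (θ : ℝ) (hθ : 4 * Real.log 2 < θ) :
    -(ρ : ℝ) * Real.exp (-θ) / (1 - Real.exp (-θ)) ^ 2
      + ∑ j ∈ Finset.Icc 1 ρ,
          (j : ℝ) ^ 2 * Real.exp (-θ * j) / (1 - Real.exp (-θ * j)) ^ 2 ≤ 0 := by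
  set x : ℝ := Real.exp (-θ) with hxdef
  have hlog2 : (0:ℝ) < Real.log 2 := Real.log_pos (by norm_num)
  have hθpos : 0 < θ := by linarith
  have hxpos : 0 < x := Real.exp_pos _
  have he16 : Real.exp (4 * Real.log 2) = 16 := by
    rw [show (4:ℝ) * Real.log 2 = Real.log (2 ^ (4:ℕ)) by
        rw [Real.log_pow]; push_cast; ring]
    rw [Real.exp_log (by norm_num)]
    norm_num
  have hx16 : x < 1 / 16 := by
    have : x < Real.exp (-(4 * Real.log 2)) := by
      apply Real.exp_lt_exp.2; linarith
    rwa [Real.exp_neg, he16, ← one_div] at this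
  have hx1 : x < 1 := by linarith
  have key : ∀ j ∈ Finset.Icc 1 ρ,
      (j : ℝ) ^ 2 * Real.exp (-θ * j) / (1 - Real.exp (-θ * j)) ^ 2
        ≤ x / (1 - x) ^ 2 := by
    intro j hj
    have hj1 : 1 ≤ j := (Finset.mem_Icc.1 hj).1
    have hexp : Real.exp (-θ * j) = x ^ j := by
      rw [hxdef, ← Real.exp_nat_mul]; ring_nf
    rw [hexp]
    have hxj_le : x ^ j ≤ x := by
      calc x ^ j ≤ x ^ 1 := pow_le_pow_of_le_one (le_of_lt hxpos) (le_of_lt hx1) hj1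
        _ = x := pow_one x
    have hden : (1 - x) ^ 2 ≤ (1 - x ^ j) ^ 2 := by
      have h1 : 0 ≤ 1 - x := by linarith
      nlinarith
    have hdenpos : 0 < (1 - x) ^ 2 := pow_pos (by linarith) 2
    have hdenpos' : 0 < (1 - x ^ j) ^ 2 := lt_of_lt_of_le hdenpos hden
    -- numerator bound: j^2 * x^j ≤ x
    have hnum : (j : ℝ) ^ 2 * x ^ j ≤ x := by
      obtain ⟨m, rfl⟩ := Nat.exists_eq_add_of_le hj1
      have h16 : ((m : ℝ) + 1) ^ 2 ≤ 16 ^ m := aux16 m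
      have hxm : x ^ m ≤ (1/16 : ℝ) ^ m :=
        pow_le_pow_left₀ (le_of_lt hxpos) (le_of_lt hx16) m
      have h16pos : (0:ℝ) < 16 ^ m := by positivity
      have : ((1 + m : ℕ) : ℝ) ^ 2 * x ^ (1 + m) = (((m:ℝ)+1) ^ 2 * x ^ m) * x := by
        push_cast; ring
      rw [this]
      have hprod : ((m:ℝ)+1) ^ 2 * x ^ m ≤ 1 := by
        calc ((m:ℝ)+1) ^ 2 * x ^ m ≤ 16 ^ m * (1/16:ℝ) ^ m := by
              apply mul_le_mul h16 hxm (by positivity) (le_of_lt h16pos)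
          _ = 1 := by rw [← mul_pow]; norm_num
      nlinarith
    calc (j : ℝ) ^ 2 * x ^ j / (1 - x ^ j) ^ 2
        ≤ (j : ℝ) ^ 2 * x ^ j / (1 - x) ^ 2 := by
          apply div_le_div_of_nonneg_left _ hdenpos hden
          positivity
      _ ≤ x / (1 - x) ^ 2 := by gcongr
  have hsum : ∑ j ∈ Finset.Icc 1 ρ,
      (j : ℝ) ^ 2 * Real.exp (-θ * j) / (1 - Real.exp (-θ * j)) ^ 2
        ≤ (ρ : ℝ) * (x / (1 - x) ^ 2) := by
    calc ∑ j ∈ Finset.Icc 1 ρ, (j : ℝ) ^ 2 * Real.exp (-θ * j) / (1 - Real.exp (-θ * j)) ^ 2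
        ≤ ∑ _j ∈ Finset.Icc 1 ρ, x / (1 - x) ^ 2 := Finset.sum_le_sum key
      _ = (ρ : ℝ) * (x / (1 - x) ^ 2) := by
          rw [Finset.sum_const, Nat.card_Icc]; simp [nsmul_eq_mul]
  have : -(ρ : ℝ) * x / (1 - x) ^ 2 + (ρ : ℝ) * (x / (1 - x) ^ 2) = 0 := by ring
  linarith
end

section
/- For every integer j ≥ 1 and every real θ ≥ 2·ln 2, j²·e^{−θ(j−1)} ≤ ((1 − e^{−θj})/(1 − e^{−θ}))², and hence j²·e^{−θj}/(1 − e^{−θj})² ≤ e^{−θ}/(1 − e^{−θ})². -/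
open Real

/-! Since `j ≤ 2 ^ (j - 1)` and `e^{-θ} ≤ 1/4`, we get `j² e^{-θ(j-1)} ≤ 1`, while
`(1 - e^{-θj}) / (1 - e^{-θ}) ≥ 1`; this gives the first inequality. The second one follows by
writing `e^{-θj} = e^{-θ} e^{-θ(j-1)}` and dividing by `(1 - e^{-θj})²`. -/

lemma exp_neg_le_inv_four {θ : ℝ} (hθ : 2 * log 2 ≤ θ) : exp (-θ) ≤ 4⁻¹ := by
  calc exp (-θ) ≤ exp (-(2 * log 2)) := exp_le_exp.mpr (neg_le_neg hθ)
    _ = 4⁻¹ := by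
      rw [exp_neg, two_mul, exp_add, exp_log two_pos]
      norm_num

lemma succ_sq_mul_pow_le_one {x : ℝ} (hx₀ : 0 ≤ x) (hx : x ≤ 4⁻¹) (n : ℕ) :
    ((n : ℝ) + 1) ^ 2 * x ^ n ≤ 1 := by
  have hn : (n : ℝ) + 1 ≤ 2 ^ n := by exact_mod_cast Nat.lt_two_pow_self
  calc ((n : ℝ) + 1) ^ 2 * x ^ n ≤ (2 ^ n) ^ 2 * (4⁻¹) ^ n := by gcongr
    _ = 1 := by rw [← pow_mul, pow_mul', ← mul_pow]; norm_num

lemma natCast_sq_mul_exp_neg_mul_sub_one_le_one (j : ℕ) {θ : ℝ} (hθ : 2 * log 2 ≤ θ) :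
    (j : ℝ) ^ 2 * exp (-θ * ((j : ℝ) - 1)) ≤ 1 := by
  cases j with
  | zero => simp
  | succ n =>
    have hexp : exp (-θ * (((n + 1 : ℕ) : ℝ) - 1)) = exp (-θ) ^ n := by
      rw [← exp_nat_mul]; push_cast; ring_nf
    rw [hexp]
    push_cast
    exact succ_sq_mul_pow_le_one (exp_pos _).le (exp_neg_le_inv_four hθ) n

lemma one_le_one_sub_exp_neg_mul_div {θ x : ℝ} (hθ : 0 < θ) (hx : 1 ≤ x) :
    1 ≤ (1 - exp (-θ * x)) / (1 - exp (-θ)) := by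
  have hle : exp (-θ * x) ≤ exp (-θ) := exp_le_exp.mpr (by nlinarith)
  rw [one_le_div (by simpa using hθ)]
  linarith

/-- Core comparison inequality for the Mallows expected-distance analysis. -/
theorem stmt_6 (j : ℕ) (hj : 1 ≤ j) (θ : ℝ) (hθ : 2 * Real.log 2 ≤ θ) :
    (j : ℝ) ^ 2 * Real.exp (-θ * ((j : ℝ) - 1))
        ≤ ((1 - Real.exp (-θ * j)) / (1 - Real.exp (-θ))) ^ 2
      ∧ (j : ℝ) ^ 2 * Real.exp (-θ * j) / (1 - Real.exp (-θ * j)) ^ 2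
        ≤ Real.exp (-θ) / (1 - Real.exp (-θ)) ^ 2 := by
  have hθ₀ : 0 < θ := by linarith [log_pos one_lt_two]
  have hj' : (1 : ℝ) ≤ j := by exact_mod_cast hj
  have hratio := one_le_one_sub_exp_neg_mul_div hθ₀ hj'
  have first : (j : ℝ) ^ 2 * exp (-θ * ((j : ℝ) - 1))
      ≤ ((1 - exp (-θ * j)) / (1 - exp (-θ))) ^ 2 :=
    (natCast_sq_mul_exp_neg_mul_sub_one_le_one j hθ).trans (one_le_pow₀ hratio)
  refine ⟨first, ?_⟩
  have hsplit : exp (-θ * j) = exp (-θ) * exp (-θ * ((j : ℝ) - 1)) := by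
    rw [← exp_add]; ring_nf
  have hnum : 1 - exp (-θ * j) ≠ 0 := by
    have : exp (-θ * j) < 1 := exp_lt_one_iff.mpr (by nlinarith)
    linarith
  calc (j : ℝ) ^ 2 * exp (-θ * j) / (1 - exp (-θ * j)) ^ 2
      = exp (-θ) * ((j : ℝ) ^ 2 * exp (-θ * ((j : ℝ) - 1))) / (1 - exp (-θ * j)) ^ 2 := by
        rw [hsplit]; ring
    _ ≤ exp (-θ) * ((1 - exp (-θ * j)) / (1 - exp (-θ))) ^ 2 / (1 - exp (-θ * j)) ^ 2 := by
        gcongr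
    _ = exp (-θ) / (1 - exp (-θ)) ^ 2 := by
        have hden : (1 - exp (-θ * j)) ^ 2 ≠ 0 := pow_ne_zero 2 hnum
        rw [div_pow, mul_div_assoc', div_right_comm, mul_div_cancel_right₀ _ hden]
end
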